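/- arXiv:2511.04309 — 4 statements merged into one kernel-verified Lean document; each statement's English description precedes it below -/
import Mathlib

section
/- Let γ_A, γ_P > 0 and define V(t,x) = -exp(-γ_P (x + c(T-t))) where c = (1/2)·(1+γ_P)²/(1+γ_A+γ_P) - γ_P/2. Then V solves the HJB equation V_t + sup_{Z∈ℝ} { V_x (Z - (1+γ_A)/2 · Z²) + (1/2) V_xx (1-Z)² } = 0 for all t ∈ [0,T] and x ∈ ℝ, with terminal condition V(T,x) = -exp(-γ_P x). -/
/-!
Both derivatives of `V` are multiples of `E = exp (-γP (x + c (T - t)))`: `V_t = -γP c E`,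
`V_x = γP E`, `V_xx = -γP² E`. The Hamiltonian is then `E` times a quadratic in `Z` with
leading coefficient `-γP (1 + γA + γP) / 2 < 0`, whose maximum (attained at
`Z* = (1 + γP) / (1 + γA + γP)`) is exactly `γP c E`; this is how `c` is chosen.
-/

open Real

theorem isGreatest_range_quadratic {a b k : ℝ} (ha : a < 0) :
    IsGreatest (Set.range fun Z => a * Z ^ 2 + b * Z + k) (k - b ^ 2 / (4 * a)) := by
  have hsq (Z : ℝ) :
      a * Z ^ 2 + b * Z + k = k - b ^ 2 / (4 * a) + (2 * a * Z + b) ^ 2 / (4 * a) := by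
    field_simp [ha.ne]; ring
  refine ⟨⟨-b / (2 * a), by dsimp only; rw [hsq]; field_simp [ha.ne]; ring⟩, ?_⟩
  rintro _ ⟨Z, rfl⟩
  dsimp only
  rw [hsq]
  have : (2 * a * Z + b) ^ 2 / (4 * a) ≤ 0 :=
    div_nonpos_of_nonneg_of_nonpos (sq_nonneg _) (by linarith)
  linarith

theorem sSup_hamiltonian {γ p q : ℝ} (hpq : q < p * (1 + γ)) :
    sSup {y : ℝ | ∃ Z : ℝ, y = p * (Z - (1 + γ) / 2 * Z ^ 2) + (1 / 2) * q * (1 - Z) ^ 2}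
      = q / 2 + (p - q) ^ 2 / (2 * (p * (1 + γ) - q)) := by
  have hset : {y : ℝ | ∃ Z : ℝ, y = p * (Z - (1 + γ) / 2 * Z ^ 2) + (1 / 2) * q * (1 - Z) ^ 2}
      = Set.range fun Z => -(p * (1 + γ) - q) / 2 * Z ^ 2 + (p - q) * Z + q / 2 := by
    ext y
    constructor <;> rintro ⟨Z, rfl⟩ <;> exact ⟨Z, by ring⟩
  rw [hset, (isGreatest_range_quadratic (by linarith)).csSup_eq]
  have : p * (1 + γ) - q ≠ 0 := by linarith
  field_simp
  ring

theorem sSup_hamiltonian_cara {γA γP E : ℝ} (hD : 0 < 1 + γA + γP) (hP : 0 < γP) (hE : 0 < E) :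
    sSup {y : ℝ | ∃ Z : ℝ,
        y = γP * E * (Z - (1 + γA) / 2 * Z ^ 2) + (1 / 2) * (-γP ^ 2 * E) * (1 - Z) ^ 2}
      = γP * ((1 / 2) * (1 + γP) ^ 2 / (1 + γA + γP) - γP / 2) * E := by
  have hden : γP * E * (1 + γA) - -γP ^ 2 * E = γP * E * (1 + γA + γP) := by ring
  rw [sSup_hamiltonian (by nlinarith [mul_pos (mul_pos hP hE) hD]), hden]
  field_simp
  ring

theorem hasDerivAt_exp_neg_mul_add (γ k x : ℝ) :
    HasDerivAt (fun z => exp (-γ * (z + k))) (-γ * exp (-γ * (x + k))) x :=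
  (((hasDerivAt_id' x).add_const k).const_mul (-γ)).exp.congr_deriv (by ring)

theorem hasDerivAt_neg_exp_neg_mul_sub (γ x c T t : ℝ) :
    HasDerivAt (fun s => -exp (-γ * (x + c * (T - s))))
      (-(γ * c) * exp (-γ * (x + c * (T - t)))) t :=
  ((((hasDerivAt_id' t).const_sub T).const_mul c).const_add x
    |>.const_mul (-γ)).exp.fun_neg.congr_deriv (by ring)

theorem hm_explicit_solution_general (T γA γP c : ℝ) (hA : 0 < γA) (hP : 0 < γP)
    (hc : c = (1/2) * (1+γP)^2 / (1+γA+γP) - γP/2)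
    (V : ℝ → ℝ → ℝ)
    (hV : ∀ t x, V t x = -Real.exp (-γP * (x + c * (T - t)))) :
    (∀ t ∈ Set.Icc (0:ℝ) T, ∀ x : ℝ,
      deriv (fun s => V s x) t
        + sSup {y : ℝ | ∃ Z : ℝ,
            y = deriv (fun z => V t z) x * (Z - (1+γA)/2 * Z^2)
              + (1/2) * deriv (deriv (fun z => V t z)) x * (1-Z)^2} = 0)
    ∧ (∀ x : ℝ, V T x = -Real.exp (-γP * x)) := by
  obtain rfl : V = fun t x => -exp (-γP * (x + c * (T - t))) := funext₂ hV
  refine ⟨fun t _ x => ?_, fun x => by simp⟩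
  set E := exp (-γP * (x + c * (T - t)))
  have hVt : deriv (fun s => -exp (-γP * (x + c * (T - s)))) t = -(γP * c) * E :=
    (hasDerivAt_neg_exp_neg_mul_sub γP x c T t).deriv
  have hVx : deriv (fun z => -exp (-γP * (z + c * (T - t))))
      = fun z => γP * exp (-γP * (z + c * (T - t))) :=
    funext fun z => (hasDerivAt_exp_neg_mul_add γP (c * (T - t)) z).fun_neg.deriv.trans (by ring)
  have hVxx : deriv (fun z => γP * exp (-γP * (z + c * (T - t)))) x = -γP ^ 2 * E :=
    ((hasDerivAt_exp_neg_mul_add γP (c * (T - t)) x).const_mul γP).deriv.trans (by ring)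
  dsimp only
  rw [hVt, hVx, hVxx, sSup_hamiltonian_cara (by positivity) hP (exp_pos _), ← hc]
  ring

/-- Holmström–Milgrom: the explicit exponential candidate solves the HJB equation. -/
theorem hm_explicit_solution (T γA γP c : ℝ) (hA : 0 < γA) (hP : 0 < γP) (hT : 0 < T)
    (hc : c = (1/2) * (1+γP)^2 / (1+γA+γP) - γP/2)
    (V : ℝ → ℝ → ℝ)
    (hV : ∀ t x, V t x = -Real.exp (-γP * (x + c * (T - t)))) :
    (∀ t ∈ Set.Icc (0:ℝ) T, ∀ x : ℝ,
      deriv (fun s => V s x) t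
        + sSup {y : ℝ | ∃ Z : ℝ,
            y = deriv (fun z => V t z) x * (Z - (1+γA)/2 * Z^2)
              + (1/2) * deriv (deriv (fun z => V t z)) x * (1-Z)^2} = 0)
    ∧ (∀ x : ℝ, V T x = -Real.exp (-γP * x)) :=
  hm_explicit_solution_general T γA γP c hA hP hc V hV
end

section
/- Fix C₀ ∈ ℝ and T > 0. The function V(t,w) = (C₀ + 1/2)(T - t) - w solves the HJB equation V_t + sup_{α,β,Z ∈ ℝ} { (-C₀ + Z²/2 - β²/2 - α) V_w + (Z²/2) V_ww + (1-β)(β+Z) - α } = 0 with terminal condition V(T,w) = -w, and the supremum at each point is attained whenever β + Z = 1 (with any α, since the coefficient of α in the Hamiltonian vanishes because V_w = -1). -/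
lemma deriv_time (C₀ T w t : ℝ) :
    deriv (fun s => (C₀ + 1/2) * (T - s) - w) t = -(C₀ + 1/2) := by
  have h : HasDerivAt (fun s : ℝ => (C₀ + 1/2) * (T - s) - w) (-(C₀ + 1/2)) t := by
    have := ((hasDerivAt_id t).const_sub T).const_mul (C₀ + 1/2) |>.sub_const w
    simpa using this
  exact h.deriv

lemma deriv_space (C₀ T t : ℝ) :
    deriv (fun v => (C₀ + 1/2) * (T - t) - v) = fun _ => (-1 : ℝ) := by
  funext w
  have h : HasDerivAt (fun v : ℝ => (C₀ + 1/2) * (T - t) - v) (-1) w := by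
    simpa using (hasDerivAt_id w).const_sub ((C₀ + 1/2) * (T - t))
  exact h.deriv

lemma ham_val (C₀ α β Z : ℝ) :
    (-C₀ + Z^2/2 - β^2/2 - α) * (-1) + (Z^2/2) * 0 + (1-β) * (β+Z) - α
      = C₀ + 1/2 - (β + Z - 1)^2 / 2 := by ring

lemma sup_ham (C₀ T t w : ℝ) :
    sSup {y : ℝ | ∃ α β Z : ℝ,
        y = (-C₀ + Z^2/2 - β^2/2 - α) * deriv (fun v => (C₀ + 1/2) * (T - t) - v) w
          + (Z^2/2) * deriv (deriv (fun v => (C₀ + 1/2) * (T - t) - v)) w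
          + (1-β) * (β+Z) - α} = C₀ + 1/2 := by
  have hd1 := deriv_space C₀ T t
  have hd2 : deriv (deriv (fun v => (C₀ + 1/2) * (T - t) - v)) w = 0 := by
    rw [hd1]; simp
  apply IsGreatest.csSup_eq
  constructor
  · exact ⟨0, 1, 0, by rw [hd1]; simp; ring⟩
  · rintro y ⟨α, β, Z, rfl⟩
    rw [hd1]
    simp only [deriv_const']
    nlinarith [sq_nonneg (β + Z - 1)]

/-- Continuous-payment PA problem: the linear candidate solves the HJB equation, and the
Hamiltonian supremum is attained whenever `β + Z = 1` (for any `α`). -/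
theorem continuous_payment_explicit (C₀ T : ℝ) (hT : 0 < T)
    (V : ℝ → ℝ → ℝ)
    (hV : ∀ t w, V t w = (C₀ + 1/2) * (T - t) - w) :
    (∀ t ∈ Set.Icc (0:ℝ) T, ∀ w : ℝ,
      deriv (fun s => V s w) t
        + sSup {y : ℝ | ∃ α β Z : ℝ,
            y = (-C₀ + Z^2/2 - β^2/2 - α) * deriv (fun v => V t v) w
              + (Z^2/2) * deriv (deriv (fun v => V t v)) w
              + (1-β) * (β+Z) - α} = 0)
    ∧ (∀ w : ℝ, V T w = -w)
    ∧ (∀ t ∈ Set.Icc (0:ℝ) T, ∀ w α β Z : ℝ, β + Z = 1 →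
        (-C₀ + Z^2/2 - β^2/2 - α) * deriv (fun v => V t v) w
          + (Z^2/2) * deriv (deriv (fun v => V t v)) w
          + (1-β) * (β+Z) - α
        = sSup {y : ℝ | ∃ α' β' Z' : ℝ,
            y = (-C₀ + Z'^2/2 - β'^2/2 - α') * deriv (fun v => V t v) w
              + (Z'^2/2) * deriv (deriv (fun v => V t v)) w
              + (1-β') * (β'+Z') - α'}) := by
  have hVfun : ∀ t, (fun v => V t v) = fun v => (C₀ + 1/2) * (T - t) - v := by
    intro t; funext v; exact hV t v
  have hVfun2 : ∀ w, (fun s => V s w) = fun s => (C₀ + 1/2) * (T - s) - w := by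
    intro w; funext s; exact hV s w
  refine ⟨?_, ?_, ?_⟩
  · intro t _ w
    rw [hVfun2, hVfun, deriv_time, sup_ham]
    ring
  · intro w; rw [hV]; ring
  · intro t _ w α β Z hβZ
    rw [hVfun, sup_ham, deriv_space]
    simp only [deriv_const']
    nlinarith [hβZ]
end

section
/- Fix C₀ ∈ ℝ, T > 0, and constraint parameters with ū < 1 and u̲ ≤ ū. The function V(t,w) = (C₀ - ū²/2 + ū)(T-t) - w solves the HJB equation V_t + sup { (-C₀ + Z²/2 - β²/2 - α)V_w + (Z²/2)V_ww + (1-β)(β+Z) - α : α ∈ ℝ, β̲ ≤ β ≤ β̄, u̲ ≤ β+Z ≤ ū } = 0 with V(T,w) = -w, and the supremum is attained whenever β + Z = ū. -/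
lemma cc_isGreatest (C₀ ulo uhi blo bhi : ℝ)
    (huhi : uhi < 1) (hu : ulo ≤ uhi) (hb : blo ≤ bhi) :
    IsGreatest {y : ℝ | ∃ α β Z : ℝ,
        blo ≤ β ∧ β ≤ bhi ∧ ulo ≤ β + Z ∧ β + Z ≤ uhi ∧
        y = (-C₀ + Z^2/2 - β^2/2 - α) * (-1)
          + (Z^2/2) * 0 + (1-β) * (β+Z) - α}
      (C₀ - uhi^2/2 + uhi) := by
  constructor
  · exact ⟨0, blo, uhi - blo, le_refl _, hb, by linarith, by linarith, by ring⟩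
  · rintro y ⟨α, β, Z, h1, h2, h3, h4, rfl⟩
    have key : (-C₀ + Z^2/2 - β^2/2 - α) * (-1) + (Z^2/2) * 0 + (1-β) * (β+Z) - α
        = C₀ + (β+Z) - (β+Z)^2/2 := by ring
    rw [key]
    nlinarith [sq_nonneg (uhi - (β+Z))]

lemma cc_deriv_t (c w t : ℝ) (T : ℝ) :
    deriv (fun s : ℝ => c * (T - s) - w) t = -c := by
  have h : HasDerivAt (fun s : ℝ => c * (T - s) - w) (c * (-1)) t :=
    (((hasDerivAt_id t).const_sub T).const_mul c).sub_const w
  simpa using h.deriv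

lemma cc_deriv_w (c w : ℝ) :
    deriv (fun v : ℝ => c - v) w = -1 := by
  have h : HasDerivAt (fun v : ℝ => c - v) (-1) w := (hasDerivAt_id w).const_sub c
  simpa using h.deriv

lemma cc_deriv_w2 (c w : ℝ) :
    deriv (deriv (fun v : ℝ => c - v)) w = 0 := by
  have h : deriv (fun v : ℝ => c - v) = fun _ => (-1 : ℝ) := funext fun x => cc_deriv_w c x
  rw [h]; simp

/-- Constrained-contract PA problem (binding case `ū < 1`): the linear candidate solves
the constrained HJB equation and the supremum is attained whenever `β + Z = ū`. -/
theorem constrained_contract_explicit (C₀ T ulo uhi blo bhi : ℝ) (hT : 0 < T)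
    (huhi : uhi < 1) (hu : ulo ≤ uhi) (hb : blo ≤ bhi)
    (V : ℝ → ℝ → ℝ)
    (hV : ∀ t w, V t w = (C₀ - uhi^2/2 + uhi) * (T - t) - w) :
    (∀ t ∈ Set.Icc (0:ℝ) T, ∀ w : ℝ,
      deriv (fun s => V s w) t
        + sSup {y : ℝ | ∃ α β Z : ℝ,
            blo ≤ β ∧ β ≤ bhi ∧ ulo ≤ β + Z ∧ β + Z ≤ uhi ∧
            y = (-C₀ + Z^2/2 - β^2/2 - α) * deriv (fun v => V t v) w
              + (Z^2/2) * deriv (deriv (fun v => V t v)) w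
              + (1-β) * (β+Z) - α} = 0)
    ∧ (∀ w : ℝ, V T w = -w)
    ∧ (∀ t ∈ Set.Icc (0:ℝ) T, ∀ w α β Z : ℝ,
        blo ≤ β → β ≤ bhi → ulo ≤ β + Z → β + Z = uhi →
        (-C₀ + Z^2/2 - β^2/2 - α) * deriv (fun v => V t v) w
          + (Z^2/2) * deriv (deriv (fun v => V t v)) w
          + (1-β) * (β+Z) - α
        = sSup {y : ℝ | ∃ α' β' Z' : ℝ,
            blo ≤ β' ∧ β' ≤ bhi ∧ ulo ≤ β' + Z' ∧ β' + Z' ≤ uhi ∧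
            y = (-C₀ + Z'^2/2 - β'^2/2 - α') * deriv (fun v => V t v) w
              + (Z'^2/2) * deriv (deriv (fun v => V t v)) w
              + (1-β') * (β'+Z') - α'}) := by
  set c := C₀ - uhi^2/2 + uhi with hc
  have hft : ∀ w, (fun s => V s w) = fun s => c * (T - s) - w := fun w =>
    funext fun s => hV s w
  have hfw : ∀ t, (fun v => V t v) = fun v => c * (T - t) - v := fun t =>
    funext fun v => hV t v
  have hdt : ∀ t w : ℝ, deriv (fun s => V s w) t = -c := fun t w => by
    rw [hft w]; exact cc_deriv_t c w t T
  have hdw : ∀ t w : ℝ, deriv (fun v => V t v) w = -1 := fun t w => by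
    rw [hfw t]; exact cc_deriv_w _ w
  have hddw : ∀ t w : ℝ, deriv (deriv (fun v => V t v)) w = 0 := fun t w => by
    rw [hfw t]; exact cc_deriv_w2 _ w
  have hsup : ∀ t w : ℝ, sSup {y : ℝ | ∃ α β Z : ℝ,
      blo ≤ β ∧ β ≤ bhi ∧ ulo ≤ β + Z ∧ β + Z ≤ uhi ∧
      y = (-C₀ + Z^2/2 - β^2/2 - α) * deriv (fun v => V t v) w
        + (Z^2/2) * deriv (deriv (fun v => V t v)) w
        + (1-β) * (β+Z) - α} = c := by
    intro t w
    simp only [hdw t, hddw t, hc]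
    exact (cc_isGreatest C₀ ulo uhi blo bhi huhi hu hb).csSup_eq
  refine ⟨fun t _ w => ?_, fun w => by rw [hV]; ring, fun t _ w α β Z h1 h2 h3 h4 => ?_⟩
  · rw [hdt, hsup]; ring
  · rw [hsup, hdw, hddw, hc]
    nlinarith [h4]
end

section
/- Fix σ > 0 and T > 0. The function V(t,x,w) = x - e^w + (1/4) e^{-w} x² (e^{σ²(T-t)} - 1), defined for t ∈ [0,T], x ∈ ℝ, w ∈ ℝ, solves the HJB equation V_t + σ² x² sup_{Z ∈ ℝ} { Z V_x + (Z²/2) V_w + (1/2)(V_xx + Z² V_ww) + Z V_xw } = 0 with terminal condition V(T,x,w) = x - e^w, and for x ≠ 0 the supremum is attained at Z* = (1/2) e^{-w}. -/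
/-!
Writing `c = e^{σ²(T-t)} - 1`, the spatial part of `V` is `x - e^w + (c/4) e^{-w} x²`. In the
Hamiltonian the terms in `x` cancel (`V_x + V_xw = 1`, `V_w + V_ww = -2e^w`), leaving the concave
quadratic `Z - e^w Z² + (c/4) e^{-w}`, maximised at `Z = e^{-w}/2` with value `(1 + c) e^{-w}/4`.
This exactly balances `V_t = -(σ²/4) e^{-w} x² (1 + c)`.
-/

open Real Set

noncomputable section

/-- `V(t, ·, ·)` with `c = e^{σ²(T-t)} - 1`. -/
def hjbProfile (c x w : ℝ) : ℝ := x - exp w + c / 4 * exp (-w) * x ^ 2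

def hamiltonian (f : ℝ → ℝ → ℝ) (x w Z : ℝ) : ℝ :=
  Z * deriv (fun z => f z w) x
    + (Z ^ 2 / 2) * deriv (fun v => f x v) w
    + (1 / 2) * (deriv (deriv (fun z => f z w)) x + Z ^ 2 * deriv (deriv (fun v => f x v)) w)
    + Z * deriv (fun v => deriv (fun z => f z v) x) w

end

theorem sSup_eq_of_isMaxOn_univ {α : Type*} {f : α → ℝ} {a : α} (h : IsMaxOn f univ a) :
    sSup {y | ∃ z, y = f z} = f a := by
  refine IsGreatest.csSup_eq ⟨⟨a, rfl⟩, ?_⟩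
  rintro y ⟨z, rfl⟩
  exact isMaxOn_univ_iff.mp h z

theorem isMaxOn_sub_mul_sq_add {a : ℝ} (ha : 0 < a) (b : ℝ) :
    IsMaxOn (fun Z => Z - a * Z ^ 2 + b) univ (1 / 2 * a⁻¹) := by
  refine isMaxOn_univ_iff.mpr fun Z => ?_
  have h_square : Z - a * Z ^ 2 + b = a⁻¹ / 4 + b - a * (Z - 1 / 2 * a⁻¹) ^ 2 := by
    field_simp; ring
  have h_max : 1 / 2 * a⁻¹ - a * (1 / 2 * a⁻¹) ^ 2 + b = a⁻¹ / 4 + b := by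
    field_simp; ring
  rw [h_square, h_max]
  exact sub_le_self _ (by positivity)

theorem hasDerivAt_exp_neg (w : ℝ) : HasDerivAt (fun v => exp (-v)) (-exp (-w)) w := by
  simpa using (hasDerivAt_neg w).exp

section Profile

variable (c : ℝ)

theorem deriv_hjbProfile_fst (x w : ℝ) :
    deriv (fun z => hjbProfile c z w) x = 1 + c / 2 * exp (-w) * x := by
  have h : HasDerivAt (fun z => hjbProfile c z w)
      (1 + c / 4 * exp (-w) * ((2 : ℕ) * x ^ 1)) x :=
    ((hasDerivAt_id x).sub_const _).add ((hasDerivAt_pow 2 x).const_mul _)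
  rw [h.deriv]; push_cast; ring

theorem deriv_deriv_hjbProfile_fst (x w : ℝ) :
    deriv (deriv fun z => hjbProfile c z w) x = c / 2 * exp (-w) := by
  have h : HasDerivAt (fun x => 1 + c / 2 * exp (-w) * x) (c / 2 * exp (-w) * 1) x :=
    ((hasDerivAt_id x).const_mul _).const_add 1
  rw [funext (deriv_hjbProfile_fst c · w), h.deriv, mul_one]

theorem deriv_hjbProfile_snd (x w : ℝ) :
    deriv (fun v => hjbProfile c x v) w = -exp w - c / 4 * exp (-w) * x ^ 2 := by
  have h : HasDerivAt (fun v => hjbProfile c x v) (-exp w + c / 4 * -exp (-w) * x ^ 2) w :=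
    ((hasDerivAt_exp w).const_sub x).add (((hasDerivAt_exp_neg w).const_mul _).mul_const _)
  rw [h.deriv]; ring

theorem deriv_deriv_hjbProfile_snd (x w : ℝ) :
    deriv (deriv fun v => hjbProfile c x v) w = -exp w + c / 4 * exp (-w) * x ^ 2 := by
  have h : HasDerivAt (fun w => -exp w - c / 4 * exp (-w) * x ^ 2)
      (-exp w - c / 4 * -exp (-w) * x ^ 2) w :=
    (hasDerivAt_exp w).neg.sub (((hasDerivAt_exp_neg w).const_mul _).mul_const _)
  rw [funext (deriv_hjbProfile_snd c x), h.deriv]; ring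

theorem deriv_deriv_hjbProfile_fst_snd (x w : ℝ) :
    deriv (fun v => deriv (fun z => hjbProfile c z v) x) w = -(c / 2 * exp (-w) * x) := by
  have h : HasDerivAt (fun v => 1 + c / 2 * exp (-v) * x) (c / 2 * -exp (-w) * x) w :=
    (((hasDerivAt_exp_neg w).const_mul _).mul_const x).const_add 1
  simp only [deriv_hjbProfile_fst, h.deriv]; ring

theorem hamiltonian_hjbProfile (x w Z : ℝ) :
    hamiltonian (hjbProfile c) x w Z = Z - exp w * Z ^ 2 + c / 4 * exp (-w) := by
  rw [hamiltonian, deriv_deriv_hjbProfile_fst_snd, deriv_hjbProfile_fst, deriv_deriv_hjbProfile_fst,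
    deriv_hjbProfile_snd, deriv_deriv_hjbProfile_snd]
  ring

theorem isMaxOn_hamiltonian_hjbProfile (x w : ℝ) :
    IsMaxOn (hamiltonian (hjbProfile c) x w) univ ((1 / 2) * exp (-w)) := by
  rw [funext (hamiltonian_hjbProfile c x w), exp_neg]
  exact isMaxOn_sub_mul_sq_add (exp_pos w) _

theorem hamiltonian_hjbProfile_max (x w : ℝ) :
    hamiltonian (hjbProfile c) x w ((1 / 2) * exp (-w)) = (1 + c) / 4 * exp (-w) := by
  rw [hamiltonian_hjbProfile, exp_neg]
  field_simp
  ring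

end Profile

theorem deriv_hjbProfile_time (σ T t x w : ℝ) :
    deriv (fun s => hjbProfile (exp (σ ^ 2 * (T - s)) - 1) x w) t
      = -(σ ^ 2 / 4 * exp (-w) * x ^ 2 * exp (σ ^ 2 * (T - t))) := by
  have h_exponent : HasDerivAt (fun s => σ ^ 2 * (T - s)) (σ ^ 2 * -1) t :=
    ((hasDerivAt_id t).const_sub T).const_mul _
  have h : HasDerivAt (fun s => hjbProfile (exp (σ ^ 2 * (T - s)) - 1) x w)
      (exp (σ ^ 2 * (T - t)) * (σ ^ 2 * -1) / 4 * exp (-w) * x ^ 2) t :=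
    ((((h_exponent.exp.sub_const 1).div_const 4).mul_const _).mul_const _).const_add _
  rw [h.deriv]; ring

theorem cpt_explicit_solution_general (σ T : ℝ) (V : ℝ → ℝ → ℝ → ℝ)
    (hV : ∀ t x w, V t x w
      = x - Real.exp w + (1/4) * Real.exp (-w) * x^2 * (Real.exp (σ^2 * (T - t)) - 1)) :
    (∀ t ∈ Set.Icc (0:ℝ) T, ∀ x w : ℝ,
      deriv (fun s => V s x w) t
        + σ^2 * x^2 * sSup {y : ℝ | ∃ Z : ℝ,
            y = Z * deriv (fun z => V t z w) x
              + (Z^2/2) * deriv (fun v => V t x v) w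
              + (1/2) * (deriv (deriv (fun z => V t z w)) x
                  + Z^2 * deriv (deriv (fun v => V t x v)) w)
              + Z * deriv (fun v => deriv (fun z => V t z v) x) w} = 0)
    ∧ (∀ x w : ℝ, V T x w = x - Real.exp w)
    ∧ (∀ t ∈ Set.Icc (0:ℝ) T, ∀ x w : ℝ, x ≠ 0 →
        IsMaxOn (fun Z : ℝ =>
            Z * deriv (fun z => V t z w) x
              + (Z^2/2) * deriv (fun v => V t x v) w
              + (1/2) * (deriv (deriv (fun z => V t z w)) x
                  + Z^2 * deriv (deriv (fun v => V t x v)) w)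
              + Z * deriv (fun v => deriv (fun z => V t z v) x) w)
          Set.univ ((1/2) * Real.exp (-w))) := by
  obtain rfl : V = fun t => hjbProfile (exp (σ ^ 2 * (T - t)) - 1) :=
    funext fun t => funext fun x => funext fun w => by rw [hV, hjbProfile]; ring
  refine ⟨fun t _ x w => ?_, fun x w => by simp [hjbProfile], fun t _ x w _ => ?_⟩
  · change _ + _ * sSup {y | ∃ Z, y = hamiltonian _ x w Z} = 0
    rw [sSup_eq_of_isMaxOn_univ (isMaxOn_hamiltonian_hjbProfile _ x w), hamiltonian_hjbProfile_max,
      deriv_hjbProfile_time]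
    ring
  · exact isMaxOn_hamiltonian_hjbProfile _ x w

/-- Two-dimensional PA problem (CPT Example 5.5): the explicit candidate solves the HJB
equation, with the inner supremum attained at `Z* = (1/2)e^{-w}` whenever `x ≠ 0`. -/
theorem cpt_explicit_solution (σ T : ℝ) (hσ : 0 < σ) (hT : 0 < T)
    (V : ℝ → ℝ → ℝ → ℝ)
    (hV : ∀ t x w, V t x w
      = x - Real.exp w + (1/4) * Real.exp (-w) * x^2 * (Real.exp (σ^2 * (T - t)) - 1)) :
    (∀ t ∈ Set.Icc (0:ℝ) T, ∀ x w : ℝ,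
      deriv (fun s => V s x w) t
        + σ^2 * x^2 * sSup {y : ℝ | ∃ Z : ℝ,
            y = Z * deriv (fun z => V t z w) x
              + (Z^2/2) * deriv (fun v => V t x v) w
              + (1/2) * (deriv (deriv (fun z => V t z w)) x
                  + Z^2 * deriv (deriv (fun v => V t x v)) w)
              + Z * deriv (fun v => deriv (fun z => V t z v) x) w} = 0)
    ∧ (∀ x w : ℝ, V T x w = x - Real.exp w)
    ∧ (∀ t ∈ Set.Icc (0:ℝ) T, ∀ x w : ℝ, x ≠ 0 →
        IsMaxOn (fun Z : ℝ =>
            Z * deriv (fun z => V t z w) x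
              + (Z^2/2) * deriv (fun v => V t x v) w
              + (1/2) * (deriv (deriv (fun z => V t z w)) x
                  + Z^2 * deriv (deriv (fun v => V t x v)) w)
              + Z * deriv (fun v => deriv (fun z => V t z v) x) w)
          Set.univ ((1/2) * Real.exp (-w))) :=
  cpt_explicit_solution_general σ T V hV
end
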